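/- arXiv:2301.03318 — 3 statements merged into one kernel-verified Lean document; each statement's English description precedes it below -/
import Mathlib

section
/- Fix M ≥ 1, labels y ∈ {0,1}^M, and a positional-invariant performance measure μ. For j ∈ {0,…,M} let E_j(y) := (1/C(M,j)) Σ_{ŷ∈Y_j} μ(ŷ, y), and let k* ∈ argmax_{j∈{0,…,M}} E_j(y). Then the Dutch Draw classifier DD_{k*} (the uniform distribution on Y_{k*}) is permutation-optimal for maximization among all input-independent classifiers: for every probability mass function h on {0,1}^M, Perf_{μ,y}(h) ≤ Perf_{μ,y}(DD_{k*}) = E_{k*}(y). -/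
/-- `Yset M j`: binary vectors of length `M` (functions `Fin M → Bool`) with exactly `j` ones. -/
def Yset (M j : ℕ) : Finset (Fin M → Bool) :=
  Finset.univ.filter (fun v => (Finset.univ.filter (fun i => v i = true)).card = j)

/-- A performance measure is positional-invariant if permuting predictions and labels
simultaneously leaves it unchanged. -/
def PosInvariant (M : ℕ) (μ : (Fin M → Bool) → (Fin M → Bool) → ℝ) : Prop :=
  ∀ (π : Equiv.Perm (Fin M)) (yhat y : Fin M → Bool), μ (yhat ∘ ⇑π) (y ∘ ⇑π) = μ yhat y

/-- Group average `E_j(y)`: the mean of `μ(yhat, y)` over `yhat ∈ Y_j`. -/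
noncomputable def Egroup (M : ℕ) (μ : (Fin M → Bool) → (Fin M → Bool) → ℝ)
    (y : Fin M → Bool) (j : ℕ) : ℝ :=
  (1 / (M.choose j : ℝ)) * ∑ yhat ∈ Yset M j, μ yhat y

/-- Permuted expected performance of an input-independent classifier with pmf `h`. -/
noncomputable def Perf (M : ℕ) (μ : (Fin M → Bool) → (Fin M → Bool) → ℝ)
    (y : Fin M → Bool) (h : (Fin M → Bool) → ℝ) : ℝ :=
  (1 / (M.factorial : ℝ)) *
    ∑ π : Equiv.Perm (Fin M), ∑ yhat : Fin M → Bool, h yhat * μ yhat (y ∘ ⇑π)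

/-- Dutch Draw classifier `DD_j`: the uniform distribution on `Y_j`. -/
noncomputable def DD (M j : ℕ) : (Fin M → Bool) → ℝ :=
  fun yhat => if yhat ∈ Yset M j then 1 / (M.choose j : ℝ) else 0

/-! ### Auxiliary lemmas -/

/-- Number of ones in a binary vector. -/
def cnt (M : ℕ) (v : Fin M → Bool) : ℕ :=
  (Finset.univ.filter (fun i => v i = true)).card

lemma mem_Yset_iff {M j : ℕ} (v : Fin M → Bool) : v ∈ Yset M j ↔ cnt M v = j := by
  simp [Yset, cnt]

lemma cnt_le {M : ℕ} (v : Fin M → Bool) : cnt M v ≤ M := by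
  simpa [cnt] using Finset.card_filter_le (Finset.univ : Finset (Fin M)) (fun i => v i = true)

lemma cnt_comp_perm {M : ℕ} (v : Fin M → Bool) (π : Equiv.Perm (Fin M)) :
    cnt M (v ∘ ⇑π) = cnt M v := by
  unfold cnt
  rw [← Finset.card_map ⟨⇑π, π.injective⟩]
  congr 1
  ext j
  simp only [Finset.mem_map, Finset.mem_filter, Finset.mem_univ, true_and,
    Function.Embedding.coeFn_mk, Function.comp_apply]
  constructor
  · rintro ⟨i, hi, rfl⟩; exact hi
  · intro hj; exact ⟨π.symm j, by simpa using hj, by simp⟩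

lemma comp_perm_mem_Yset {M j : ℕ} {v : Fin M → Bool} (π : Equiv.Perm (Fin M))
    (hv : v ∈ Yset M j) : (v ∘ ⇑π) ∈ Yset M j := by
  rw [mem_Yset_iff] at hv ⊢
  rw [cnt_comp_perm, hv]

lemma card_Yset {M : ℕ} (j : ℕ) : (Yset M j).card = M.choose j := by
  have key : (Yset M j).card = ((Finset.univ : Finset (Fin M)).powersetCard j).card := by
    apply Finset.card_bij (fun v _ => Finset.univ.filter (fun i => v i = true))
    · intro v hv
      rw [mem_Yset_iff] at hv
      simp [Finset.mem_powersetCard, hv, cnt] at hv ⊢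
      exact hv
    · intro a ha b hb hab
      funext i
      have : (i ∈ Finset.univ.filter (fun i => a i = true)) =
          (i ∈ Finset.univ.filter (fun i => b i = true)) := by rw [hab]
      simp only [Finset.mem_filter, Finset.mem_univ, true_and, eq_iff_iff] at this
      cases hai : a i <;> cases hbi : b i <;> simp_all
    · intro s hs
      simp only [Finset.mem_powersetCard] at hs
      refine ⟨fun i => decide (i ∈ s), ?_, ?_⟩
      · rw [mem_Yset_iff]
        unfold cnt
        rw [← hs.2]
        congr 1
        ext i; simp
      · ext i; simp
  rw [key, Finset.card_powersetCard, Finset.card_univ, Fintype.card_fin]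

/-- Two vectors with the same number of ones are related by a permutation. -/
lemma exists_perm_comp {M : ℕ} (v w : Fin M → Bool) (hcnt : cnt M v = cnt M w) :
    ∃ σ : Equiv.Perm (Fin M), w ∘ ⇑σ = v := by
  have h1 : Fintype.card {i : Fin M // v i = true} = Fintype.card {i : Fin M // w i = true} := by
    rw [Fintype.card_subtype, Fintype.card_subtype]; exact hcnt
  have h2 : Fintype.card {i : Fin M // ¬ v i = true} =
      Fintype.card {i : Fin M // ¬ w i = true} := by
    rw [Fintype.card_subtype_compl, Fintype.card_subtype_compl, h1]
  let e1 := Fintype.equivOfCardEq h1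
  let e2 := Fintype.equivOfCardEq h2
  refine ⟨Equiv.subtypeCongr e1 e2, ?_⟩
  funext i
  by_cases hv : v i = true
  · have : (Equiv.subtypeCongr e1 e2) i = (e1 ⟨i, hv⟩ : Fin M) := by
      unfold Equiv.subtypeCongr
      simp only [Equiv.trans_apply, Equiv.sumCongr_apply]
      rw [show ((Equiv.sumCompl fun x => v x = true).symm i) = Sum.inl ⟨i, hv⟩ from dif_pos hv]
      simp
    simp only [Function.comp_apply, this, hv]
    exact (e1 ⟨i, hv⟩).2
  · have : (Equiv.subtypeCongr e1 e2) i = (e2 ⟨i, hv⟩ : Fin M) := by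
      unfold Equiv.subtypeCongr
      simp only [Equiv.trans_apply, Equiv.sumCongr_apply]
      rw [show ((Equiv.sumCompl fun x => v x = true).symm i) = Sum.inr ⟨i, hv⟩ from dif_neg hv]
      simp
    simp only [Function.comp_apply, this]
    have := (e2 ⟨i, hv⟩).2
    simp only [Bool.not_eq_true] at this hv
    rw [this, hv]

noncomputable def Aof (M : ℕ) (μ : (Fin M → Bool) → (Fin M → Bool) → ℝ)
    (y : Fin M → Bool) (v : Fin M → Bool) : ℝ :=
  ∑ π : Equiv.Perm (Fin M), μ (v ∘ ⇑π) y

lemma Aof_comp {M : ℕ} (μ : (Fin M → Bool) → (Fin M → Bool) → ℝ)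
    (y v : Fin M → Bool) (σ : Equiv.Perm (Fin M)) :
    Aof M μ y (v ∘ ⇑σ) = Aof M μ y v := by
  unfold Aof
  exact Fintype.sum_equiv (Equiv.mulLeft σ) _ _ (fun π => rfl)

lemma Aof_congr {M : ℕ} (μ : (Fin M → Bool) → (Fin M → Bool) → ℝ)
    (y : Fin M → Bool) {v w : Fin M → Bool} (hcnt : cnt M v = cnt M w) :
    Aof M μ y v = Aof M μ y w := by
  obtain ⟨σ, hσ⟩ := exists_perm_comp v w hcnt
  rw [← hσ, Aof_comp]

lemma sum_Yset_Aof {M : ℕ} (μ : (Fin M → Bool) → (Fin M → Bool) → ℝ)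
    (y : Fin M → Bool) (j : ℕ) :
    ∑ v ∈ Yset M j, Aof M μ y v = (M.factorial : ℝ) * ∑ v ∈ Yset M j, μ v y := by
  unfold Aof
  rw [Finset.sum_comm]
  have : ∀ π : Equiv.Perm (Fin M), ∑ v ∈ Yset M j, μ (v ∘ ⇑π) y = ∑ v ∈ Yset M j, μ v y := by
    intro π
    apply Finset.sum_nbij' (fun v => v ∘ ⇑π) (fun v => v ∘ ⇑π.symm)
    · intro v hv; exact comp_perm_mem_Yset π hv
    · intro v hv; exact comp_perm_mem_Yset π.symm hv
    · intro v _; funext i; simp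
    · intro v _; funext i; simp
    · intro v _; rfl
  rw [Finset.sum_congr rfl (fun π _ => this π), Finset.sum_const, Finset.card_univ,
    nsmul_eq_mul]
  congr 1
  rw [Fintype.card_perm, Fintype.card_fin]

/-- Key lemma: the permutation-average of `μ v (y ∘ π)` equals `E_{cnt v}(y)`. -/
lemma avg_eq_Egroup {M : ℕ} (μ : (Fin M → Bool) → (Fin M → Bool) → ℝ)
    (hμ : PosInvariant M μ) (y v : Fin M → Bool) :
    (1 / (M.factorial : ℝ)) * ∑ π : Equiv.Perm (Fin M), μ v (y ∘ ⇑π)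
      = Egroup M μ y (cnt M v) := by
  have hstep : ∑ π : Equiv.Perm (Fin M), μ v (y ∘ ⇑π) = Aof M μ y v := by
    unfold Aof
    refine Fintype.sum_equiv (Equiv.inv _) _ _ ?_
    intro π
    simp only [Equiv.inv_apply]
    have h' := hμ π (v ∘ ⇑π⁻¹) y
    have hc : (v ∘ ⇑π⁻¹) ∘ ⇑π = v := by funext i; simp
    rw [hc] at h'
    exact h'
  set j := cnt M v with hj
  have hvY : v ∈ Yset M j := (mem_Yset_iff v).2 rfl
  have hconst : ∑ w ∈ Yset M j, Aof M μ y w = (Yset M j).card * Aof M μ y v := by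
    rw [Finset.sum_congr rfl (fun w hw => Aof_congr μ y
      (by rw [← hj, (mem_Yset_iff w).1 hw])), Finset.sum_const, nsmul_eq_mul]
  have hjle : j ≤ M := by rw [hj]; exact cnt_le v
  have hCpos : (0 : ℝ) < (M.choose j : ℝ) := by
    exact_mod_cast Nat.choose_pos hjle
  have hFpos : (0 : ℝ) < (M.factorial : ℝ) := by exact_mod_cast M.factorial_pos
  have key : ((Yset M j).card : ℝ) * Aof M μ y v
      = (M.factorial : ℝ) * ∑ w ∈ Yset M j, μ w y := by
    rw [← hconst, sum_Yset_Aof]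
  rw [card_Yset] at key
  rw [hstep, Egroup]
  field_simp
  rw [mul_comm] at key ⊢
  linarith [key]

lemma Perf_eq {M : ℕ} (μ : (Fin M → Bool) → (Fin M → Bool) → ℝ)
    (hμ : PosInvariant M μ) (y : Fin M → Bool) (g : (Fin M → Bool) → ℝ) :
    Perf M μ y g = ∑ v : Fin M → Bool, g v * Egroup M μ y (cnt M v) := by
  unfold Perf
  rw [Finset.sum_comm, Finset.mul_sum]
  refine Finset.sum_congr rfl ?_
  intro v _
  rw [← avg_eq_Egroup μ hμ y v, ← Finset.mul_sum]
  ring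

/-- The Dutch Draw classifier at a maximizing `k` is permutation-optimal for maximization
among all input-independent classifiers. -/
theorem dutchDraw_permutation_optimal_max (M : ℕ) (hM : 1 ≤ M)
    (μ : (Fin M → Bool) → (Fin M → Bool) → ℝ) (y : Fin M → Bool)
    (hμ : PosInvariant M μ)
    (k : ℕ) (hk : k ≤ M)
    (hkmax : ∀ j ≤ M, Egroup M μ y j ≤ Egroup M μ y k)
    (h : (Fin M → Bool) → ℝ)
    (hpos : ∀ v, 0 ≤ h v) (hsum : ∑ v : Fin M → Bool, h v = 1) :
    Perf M μ y h ≤ Perf M μ y (DD M k) ∧ Perf M μ y (DD M k) = Egroup M μ y k := by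
  have hCpos : (0 : ℝ) < (M.choose k : ℝ) := by exact_mod_cast Nat.choose_pos hk
  have hDD : Perf M μ y (DD M k) = Egroup M μ y k := by
    rw [Perf_eq μ hμ y]
    rw [← Finset.sum_filter_add_sum_filter_not Finset.univ (· ∈ Yset M k)]
    have h2 : ∑ v ∈ Finset.univ.filter (· ∉ Yset M k), DD M k v * Egroup M μ y (cnt M v) = 0 := by
      apply Finset.sum_eq_zero
      intro v hv
      simp only [Finset.mem_filter] at hv
      simp [DD, hv.2]
    have h1 : ∑ v ∈ Finset.univ.filter (· ∈ Yset M k), DD M k v * Egroup M μ y (cnt M v)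
        = ∑ v ∈ Yset M k, (1 / (M.choose k : ℝ)) * Egroup M μ y k := by
      rw [Finset.filter_univ_mem]
      refine Finset.sum_congr rfl ?_
      intro v hv
      rw [DD, if_pos hv, (mem_Yset_iff v).1 hv]
    rw [h1, h2, add_zero, Finset.sum_const, card_Yset, nsmul_eq_mul]
    field_simp
  refine ⟨?_, hDD⟩
  rw [hDD, Perf_eq μ hμ y]
  calc ∑ v : Fin M → Bool, h v * Egroup M μ y (cnt M v)
      ≤ ∑ v : Fin M → Bool, h v * Egroup M μ y k := by
        apply Finset.sum_le_sum
        intro v _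
        exact mul_le_mul_of_nonneg_left (hkmax _ (cnt_le v)) (hpos v)
    _ = Egroup M μ y k := by rw [← Finset.sum_mul, hsum, one_mul]
end

section
/- Fix M ≥ 1, labels y ∈ {0,1}^M, and a positional-invariant performance measure μ. For every probability mass function h on {0,1}^M, the permuted expected performance decomposes by the number of predicted ones: Perf_{μ,y}(h) = Σ_{j=0}^{M} P_h(Y_j) · E_j(y), where P_h(Y_j) := Σ_{ŷ∈Y_j} h(ŷ) and E_j(y) := (1/C(M,j)) Σ_{ŷ∈Y_j} μ(ŷ, y). -/
namespace PerfAux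

variable {M : ℕ}

/-- Number of ones in a binary vector. -/
def cnt (u : Fin M → Bool) : ℕ := (Finset.univ.filter (fun i => u i = true)).card

lemma cnt_le (u : Fin M → Bool) : cnt u ≤ M := by
  have := Finset.card_filter_le (Finset.univ : Finset (Fin M)) (fun i => u i = true)
  simpa [cnt] using this

lemma mem_Yset {j : ℕ} {u : Fin M → Bool} : u ∈ Yset M j ↔ cnt u = j := by
  simp [Yset, cnt]

lemma cnt_comp (u : Fin M → Bool) (π : Equiv.Perm (Fin M)) : cnt (u ∘ ⇑π) = cnt u := by
  unfold cnt
  rw [← Fintype.card_subtype, ← Fintype.card_subtype]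
  exact Fintype.card_congr (π.subtypeEquiv fun a => Iff.rfl)

lemma exists_perm {u v : Fin M → Bool} (h : cnt u = cnt v) :
    ∃ σ : Equiv.Perm (Fin M), v ∘ ⇑σ = u := by
  have h1 : Fintype.card {i // u i = true} = Fintype.card {i // v i = true} := by
    rw [Fintype.card_subtype, Fintype.card_subtype]; exact h
  have h2 : Fintype.card {i // ¬ u i = true} = Fintype.card {i // ¬ v i = true} := by
    rw [Fintype.card_subtype_compl, Fintype.card_subtype_compl, h1]
  let e1 := Fintype.equivOfCardEq h1
  let e2 := Fintype.equivOfCardEq h2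
  refine ⟨(Equiv.sumCompl (fun i => u i = true)).symm.trans
      ((e1.sumCongr e2).trans (Equiv.sumCompl (fun i => v i = true))), ?_⟩
  funext i
  by_cases hu : u i = true
  · have hrw : ((Equiv.sumCompl fun i => u i = true).symm i) = Sum.inl ⟨i, hu⟩ :=
      Equiv.sumCompl_symm_apply_of_pos (p := fun i => u i = true) hu
    simp only [Function.comp_apply, Equiv.trans_apply, hrw, Equiv.sumCongr_apply, Sum.map_inl,
      Equiv.sumCompl_apply_inl]
    rw [hu]; exact (e1 ⟨i, hu⟩).2
  · have hrw : ((Equiv.sumCompl fun i => u i = true).symm i) = Sum.inr ⟨i, hu⟩ :=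
      Equiv.sumCompl_symm_apply_of_neg (p := fun i => u i = true) hu
    simp only [Function.comp_apply, Equiv.trans_apply, hrw, Equiv.sumCongr_apply, Sum.map_inr,
      Equiv.sumCompl_apply_inr]
    have hv := (e2 ⟨i, hu⟩).2
    have hu' : u i = false := by simpa using hu
    have hv' : v ↑(e2 ⟨i, hu⟩) = false := by simpa using hv
    rw [hv', hu']

/-- The fiber of permutations sending `u` to `v` by right composition. -/
def fib (u v : Fin M → Bool) : Finset (Equiv.Perm (Fin M)) :=
  Finset.univ.filter (fun π => u ∘ ⇑π = v)

lemma fib_card_eq {u v w : Fin M → Bool} (hvw : cnt v = cnt w) :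
    (fib u v).card = (fib u w).card := by
  obtain ⟨σ, hσ⟩ := exists_perm hvw.symm
  refine Finset.card_bij' (fun π _ => σ.trans π) (fun ρ _ => σ.symm.trans ρ) ?_ ?_ ?_ ?_
  · intro π hπ
    simp only [fib, Finset.mem_filter, Finset.mem_univ, true_and] at hπ ⊢
    funext i
    simp only [Function.comp_apply, Equiv.trans_apply]
    have : u (π (σ i)) = v (σ i) := congrFun hπ (σ i)
    rw [this]; exact congrFun hσ i
  · intro ρ hρ
    simp only [fib, Finset.mem_filter, Finset.mem_univ, true_and] at hρ ⊢
    funext i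
    simp only [Function.comp_apply, Equiv.trans_apply]
    have : u (ρ (σ.symm i)) = w (σ.symm i) := congrFun hρ (σ.symm i)
    rw [this]
    have := congrFun hσ (σ.symm i)
    simpa using this.symm
  · intro π _; ext i; simp
  · intro ρ _; ext i; simp

lemma Yset_card (M j : ℕ) : (Yset M j).card = M.choose j := by
  have : M.choose j = (Finset.univ.powersetCard j : Finset (Finset (Fin M))).card := by
    rw [Finset.card_powersetCard, Finset.card_univ, Fintype.card_fin]
  rw [this]
  refine Finset.card_bij' (fun v _ => Finset.univ.filter (fun i => v i = true))
    (fun s _ => fun i => decide (i ∈ s)) ?_ ?_ ?_ ?_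
  · intro v hv
    rw [Finset.mem_powersetCard]
    exact ⟨Finset.filter_subset _ _, (mem_Yset.mp hv)⟩
  · intro s hs
    rw [Finset.mem_powersetCard] at hs
    rw [mem_Yset]
    show (Finset.univ.filter (fun i => decide (i ∈ s) = true)).card = j
    rw [← hs.2]
    congr 1
    ext i
    simp
  · intro v _
    funext i
    simp only [Finset.mem_filter, Finset.mem_univ, true_and]
    cases hvi : v i <;> simp [hvi]
  · intro s _
    ext i
    simp

lemma avg (μ : (Fin M → Bool) → (Fin M → Bool) → ℝ) (hμ : PosInvariant M μ)
    (y u : Fin M → Bool) :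
    (1 / (M.factorial : ℝ)) * ∑ π : Equiv.Perm (Fin M), μ u (y ∘ ⇑π)
      = Egroup M μ y (cnt u) := by
  -- step 1: μ u (y ∘ π) = μ (u ∘ π.symm) y
  have step1 : ∀ π : Equiv.Perm (Fin M), μ u (y ∘ ⇑π) = μ (u ∘ ⇑π.symm) y := by
    intro π
    have hc : (u ∘ ⇑π.symm) ∘ ⇑π = u := by funext i; simp
    have := hμ π (u ∘ ⇑π.symm) y
    rw [hc] at this
    exact this
  have step2 : ∑ π : Equiv.Perm (Fin M), μ u (y ∘ ⇑π)
      = ∑ π : Equiv.Perm (Fin M), μ (u ∘ ⇑π) y := by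
    rw [Finset.sum_congr rfl (fun π _ => step1 π)]
    exact Fintype.sum_equiv (Equiv.inv (Equiv.Perm (Fin M)))
      (fun π : Equiv.Perm (Fin M) => μ (u ∘ ⇑π.symm) y)
      (fun π : Equiv.Perm (Fin M) => μ (u ∘ ⇑π) y)
      (fun π => rfl)
  have step3 : ∑ π : Equiv.Perm (Fin M), μ (u ∘ ⇑π) y
      = ∑ v ∈ Finset.univ.image (fun π : Equiv.Perm (Fin M) => u ∘ ⇑π),
          (Finset.univ.filter (fun π : Equiv.Perm (Fin M) => u ∘ ⇑π = v)).card • μ v y :=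
    Finset.sum_comp (fun v : Fin M → Bool => μ v y) (fun π : Equiv.Perm (Fin M) => u ∘ ⇑π)
  rw [step2, step3]
  have himg : (Finset.univ : Finset (Equiv.Perm (Fin M))).image (fun π : Equiv.Perm (Fin M) => u ∘ ⇑π)
      = Yset M (cnt u) := by
    ext v
    simp only [Finset.mem_image, Finset.mem_univ, true_and, mem_Yset]
    constructor
    · rintro ⟨π, rfl⟩; exact cnt_comp u π
    · intro hv
      obtain ⟨σ, hσ⟩ := exists_perm (show cnt v = cnt u from hv)
      exact ⟨σ, hσ⟩
  rw [himg]
  set c := (fib u u).card with hc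
  have hconst : ∀ v ∈ Yset M (cnt u),
      (Finset.univ.filter (fun π : Equiv.Perm (Fin M) => u ∘ ⇑π = v)).card = c := by
    intro v hv
    exact fib_card_eq (mem_Yset.mp hv)
  have hsum : (Yset M (cnt u)).card * c = M.factorial := by
    have := Finset.card_eq_sum_card_image (fun π : Equiv.Perm (Fin M) => u ∘ ⇑π)
      (Finset.univ : Finset (Equiv.Perm (Fin M)))
    rw [himg, Finset.card_univ, Fintype.card_perm, Fintype.card_fin] at this
    rw [Finset.sum_congr rfl hconst, Finset.sum_const, smul_eq_mul] at this
    exact this.symm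
  rw [Finset.sum_congr rfl (fun v hv => by rw [hconst v hv])]
  rw [Egroup, ← Yset_card]
  have hfact : ((Yset M (cnt u)).card : ℝ) * (c : ℝ) = (M.factorial : ℝ) := by
    exact_mod_cast congrArg (Nat.cast : ℕ → ℝ) hsum
  have hfne : (M.factorial : ℝ) ≠ 0 := Nat.cast_ne_zero.mpr (Nat.factorial_ne_zero M)
  have hcne : (c : ℝ) ≠ 0 := by
    intro h0
    rw [h0, mul_zero] at hfact
    exact hfne hfact.symm
  have hYne : ((Yset M (cnt u)).card : ℝ) ≠ 0 := by
    intro h0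
    rw [h0, zero_mul] at hfact
    exact hfne hfact.symm
  rw [← hfact]
  simp only [nsmul_eq_mul, ← Finset.mul_sum, ← hc]
  field_simp

end PerfAux

/-- The permuted expected performance of any input-independent classifier decomposes by the
number of predicted ones: `Perf = Σ_j P_h(Y_j) · E_j(y)`. -/
theorem perf_decomposition (M : ℕ) (hM : 1 ≤ M)
    (μ : (Fin M → Bool) → (Fin M → Bool) → ℝ) (y : Fin M → Bool)
    (hμ : PosInvariant M μ)
    (h : (Fin M → Bool) → ℝ)
    (hpos : ∀ v, 0 ≤ h v) (hsum : ∑ v : Fin M → Bool, h v = 1) :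
    Perf M μ y h
      = ∑ j ∈ Finset.range (M + 1), (∑ yhat ∈ Yset M j, h yhat) * Egroup M μ y j := by
  classical
  open PerfAux in
  have main : Perf M μ y h = ∑ u : Fin M → Bool, h u * Egroup M μ y (PerfAux.cnt u) := by
    rw [Perf, Finset.sum_comm, Finset.mul_sum]
    refine Finset.sum_congr rfl fun u _ => ?_
    rw [← Finset.mul_sum, ← PerfAux.avg μ hμ y u]
    ring
  rw [main]
  rw [← Finset.sum_fiberwise_of_maps_to
    (fun u _ => Finset.mem_range_succ_iff.mpr (PerfAux.cnt_le u))
    (fun u => h u * Egroup M μ y (PerfAux.cnt u))]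
  refine Finset.sum_congr rfl fun j hj => ?_
  have hfib : Finset.univ.filter (fun u : Fin M → Bool => PerfAux.cnt u = j) = Yset M j := rfl
  rw [hfib, Finset.sum_mul]
  refine Finset.sum_congr rfl fun u hu => ?_
  rw [PerfAux.mem_Yset.mp hu]
end

section
/- Fix M ≥ 1, labels y ∈ {0,1}^M, a positional-invariant performance measure μ, and j ∈ {0,…,M}. The Dutch Draw classifier DD_j (the uniform distribution on Y_j) attains permuted expected performance equal to its group average: Perf_{μ,y}(DD_j) = E_j(y), where E_j(y) := (1/C(M,j)) Σ_{ŷ∈Y_j} μ(ŷ, y). -/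
lemma mem_Yset_comp (M j : ℕ) (π : Equiv.Perm (Fin M)) (v : Fin M → Bool) :
    v ∘ ⇑π ∈ Yset M j ↔ v ∈ Yset M j := by
  simp only [Yset, Finset.mem_filter, Finset.mem_univ, true_and]
  constructor <;> intro h
  · rw [← h]
    exact (Finset.card_bij (fun i _ => π i) (by simp_all) (fun a _ b _ hab => π.injective hab)
      (fun b hb => ⟨π.symm b, by simpa using hb, by simp⟩)).symm
  · rw [← h]
    exact Finset.card_bij (fun i _ => π i) (by simp_all) (fun a _ b _ hab => π.injective hab)
      (fun b hb => ⟨π.symm b, by simpa using hb, by simp⟩)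

lemma sum_Yset_perm (M j : ℕ) (μ : (Fin M → Bool) → (Fin M → Bool) → ℝ)
    (hμ : PosInvariant M μ) (y : Fin M → Bool) (π : Equiv.Perm (Fin M)) :
    ∑ yhat ∈ Yset M j, μ yhat (y ∘ ⇑π) = ∑ yhat ∈ Yset M j, μ yhat y := by
  refine Finset.sum_nbij' (fun v => v ∘ ⇑π.symm) (fun v => v ∘ ⇑π) ?_ ?_ ?_ ?_ ?_
  · intro a ha; exact (mem_Yset_comp M j π.symm a).mpr ha
  · intro a ha; exact (mem_Yset_comp M j π a).mpr ha
  · intro a _; funext i; simp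
  · intro a _; funext i; simp
  · intro a _
    have := hμ π (a ∘ ⇑π.symm) y
    rw [← this]
    congr 1
    funext i; simp

/-- The Dutch Draw classifier `DD_j` attains permuted expected performance equal to its group
average `E_j(y)`. -/
theorem perf_dutchDraw_eq_groupAvg (M : ℕ) (hM : 1 ≤ M)
    (μ : (Fin M → Bool) → (Fin M → Bool) → ℝ) (y : Fin M → Bool)
    (hμ : PosInvariant M μ)
    (j : ℕ) (hj : j ≤ M) :
    Perf M μ y (DD M j) = Egroup M μ y j := by
  unfold Perf Egroup DD
  have hC : (M.choose j : ℝ) ≠ 0 := Nat.cast_ne_zero.mpr (Nat.choose_pos hj).ne'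
  have key : ∀ π : Equiv.Perm (Fin M),
      (∑ yhat : Fin M → Bool, (if yhat ∈ Yset M j then 1 / (M.choose j : ℝ) else 0) * μ yhat (y ∘ ⇑π))
      = (1 / (M.choose j : ℝ)) * ∑ yhat ∈ Yset M j, μ yhat y := by
    intro π
    rw [← sum_Yset_perm M j μ hμ y π, Finset.mul_sum]
    simp only [ite_mul, zero_mul, Finset.sum_ite_mem, Finset.univ_inter]
  rw [Finset.sum_congr rfl (fun π _ => key π)]
  rw [Finset.sum_const, Finset.card_univ, Fintype.card_perm, Fintype.card_fin, nsmul_eq_mul]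
  have hF : (M.factorial : ℝ) ≠ 0 := Nat.cast_ne_zero.mpr M.factorial_ne_zero
  field_simp
end
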